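/- Quantitative (exponential) form of constant dwell-time stability: Let T̄ > 0 and suppose there exist ε > 0 and a continuously differentiable matrix-valued function S : [0,T̄] × 𝒫 → Sⁿ with S(τ,θ) positive definite for every (τ,θ) ∈ [0,T̄] × 𝒫, such that (i) ∂_τ S(τ,θ) + ∂_ρ S(τ,θ)μ + A(θ)ᵀS(τ,θ) + S(τ,θ)A(θ) + εIₙ ⪯ 0 for all θ ∈ 𝒫, all μ ∈ 𝒟ᵛ and all τ ∈ [0,T̄], and (ii) S(0,θ) − S(T̄,η) ⪯ 0 for all θ,η ∈ 𝒫. Set c₁ = min_{(τ,θ)∈[0,T̄]×𝒫} λ_min(S(τ,θ)) and c₂ = max_{(τ,θ)∈[0,T̄]×𝒫} λ_max(S(τ,θ)). Then for every parameter trajectory ρ with constant dwell-time T̄ and every solution x of ẋ(t) = A(ρ(t))x(t), one has ‖x(t)‖ ≤ √(c₂/c₁) · e^{−(ε/(2c₂)) t} ‖x(0)‖ for all t ≥ 0. -/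

import Mathlib

/-!
On the `k`-th dwell interval take `V(t) = x(t)ᵀ S(t - kT̄, ρ(t)) x(t)`. Its derivative is
`xᵀ (∂_τ S + ∂_ρ S ρ̇ + AᵀS + SA) x`, which is affine in `ρ̇`, so its largest value over the box `𝒟`
is attained at a vertex; there condition (i) bounds it by `-ε ‖x‖² ≤ -(ε / c₂) V`. Hence
`e^{(ε / c₂) t} V(t)` is nonincreasing on each dwell interval, and condition (ii) says it does not
increase across a jump, where `τ` resets from `T̄` to `0`. Compactness of `[0, T̄] × 𝒫` makes
`0 < c₁`, and `c₁ ‖x‖² ≤ V ≤ c₂ ‖x‖²` turns the decay of `V` into the bound on `‖x‖`.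
-/

attribute [local instance] Matrix.normedAddCommGroup Matrix.normedSpace

open Matrix Filter Set
open scoped MatrixOrder

namespace Matrix.IsHermitian

variable {ι : Type*} [Fintype ι] [DecidableEq ι] {M : Matrix ι ι ℝ}

theorem le_eigenvalues_iff (hM : M.IsHermitian) (r : ℝ) :
    (∀ i, r ≤ hM.eigenvalues i) ↔ ∀ v, r * (v ⬝ᵥ v) ≤ v ⬝ᵥ M *ᵥ v := by
  have hsub : (M - r • 1).IsSymm := (isHermitian_iff_isSymm.1 hM).sub (isSymm_one.smul r)
  rw [← forall_mem_range (p := (r ≤ ·)), ← hM.spectrum_real_eq_range_eigenvalues,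
    ← algebraMap_le_iff_le_spectrum hM.isSelfAdjoint, Matrix.le_iff,
    Algebra.algebraMap_eq_smul_one, posSemidef_iff_dotProduct_mulVec]
  simp [hsub, sub_mulVec, smul_mulVec]

theorem eigenvalues_le_iff (hM : M.IsHermitian) (r : ℝ) :
    (∀ i, hM.eigenvalues i ≤ r) ↔ ∀ v, v ⬝ᵥ M *ᵥ v ≤ r * (v ⬝ᵥ v) := by
  have hsub : (r • 1 - M).IsSymm := (isSymm_one.smul r).sub (isHermitian_iff_isSymm.1 hM)
  rw [← forall_mem_range (p := (· ≤ r)), ← hM.spectrum_real_eq_range_eigenvalues,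
    ← le_algebraMap_iff_spectrum_le hM.isSelfAdjoint, Matrix.le_iff,
    Algebra.algebraMap_eq_smul_one, posSemidef_iff_dotProduct_mulVec]
  simp [hsub, sub_mulVec, smul_mulVec]

theorem iInf_eigenvalues_mul_le (hM : M.IsHermitian) (v : ι → ℝ) :
    (⨅ i, hM.eigenvalues i) * (v ⬝ᵥ v) ≤ v ⬝ᵥ M *ᵥ v :=
  (hM.le_eigenvalues_iff _).1 (fun i => ciInf_le (finite_range _).bddBelow i) v

theorem le_iSup_eigenvalues_mul (hM : M.IsHermitian) (v : ι → ℝ) :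
    v ⬝ᵥ M *ᵥ v ≤ (⨆ i, hM.eigenvalues i) * (v ⬝ᵥ v) :=
  (hM.eigenvalues_le_iff _).1 (fun i => le_ciSup (finite_range _).bddAbove i) v

end Matrix.IsHermitian

section Rayleigh

variable {ι : Type*} [Fintype ι] {X : Type*} [TopologicalSpace X]

theorem continuous_dotProduct_mulVec :
    Continuous fun q : Matrix ι ι ℝ × (ι → ℝ) => q.2 ⬝ᵥ q.1 *ᵥ q.2 :=
  continuous_snd.dotProduct (continuous_fst.matrix_mulVec continuous_snd)

theorem IsCompact.exists_forall_mul_le_dotProduct_mulVec_le {K : Set X} (hK : IsCompact K)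
    {f : X → Matrix ι ι ℝ} (hf : ContinuousOn f K) (hpd : ∀ p ∈ K, (f p).PosDef) :
    ∃ m M : ℝ, 0 < m ∧ ∀ p ∈ K, ∀ v,
      m * (v ⬝ᵥ v) ≤ v ⬝ᵥ f p *ᵥ v ∧ v ⬝ᵥ f p *ᵥ v ≤ M * (v ⬝ᵥ v) := by
  set R : X × (ι → ℝ) → ℝ := fun q => (q.2 ⬝ᵥ f q.1 *ᵥ q.2) / (q.2 ⬝ᵥ q.2)
  have hdot_pos {v : ι → ℝ} (hv : v ≠ 0) : 0 < v ⬝ᵥ v := by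
    simpa using dotProduct_star_self_pos_iff.2 hv
  have hR_smul (p : X) {v : ι → ℝ} {c : ℝ} (hc : c ≠ 0) : R (p, c • v) = R (p, v) := by
    simp only [R, mulVec_smul, dotProduct_smul, smul_dotProduct, smul_eq_mul]
    rw [← mul_assoc, ← mul_assoc, mul_div_mul_left _ _ (mul_ne_zero hc hc)]
  have hKS : IsCompact (K ×ˢ Metric.sphere (0 : ι → ℝ) 1) := hK.prod (isCompact_sphere 0 1)
  have hRc : ContinuousOn R (K ×ˢ Metric.sphere (0 : ι → ℝ) 1) := by
    refine ContinuousOn.div ?_ (continuous_snd.dotProduct continuous_snd).continuousOn ?_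
    · exact continuous_dotProduct_mulVec.comp_continuousOn
        ((hf.comp continuousOn_fst fun q hq => hq.1).prodMk continuousOn_snd)
    · rintro ⟨p, u⟩ ⟨-, hu⟩
      exact (hdot_pos (ne_zero_of_mem_unit_sphere ⟨u, hu⟩)).ne'
  obtain ⟨m, hm, hmR⟩ := hKS.exists_forall_le' hRc (a := 0) fun q hq => by
    have hq₂ : q.2 ≠ 0 := ne_zero_of_mem_unit_sphere ⟨q.2, hq.2⟩
    have := (hpd q.1 hq.1).dotProduct_mulVec_pos hq₂
    rw [star_trivial] at this
    exact div_pos this (hdot_pos hq₂)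
  obtain ⟨M, hMR⟩ := hKS.bddAbove_image hRc
  refine ⟨m, M, hm, fun p hp v => ?_⟩
  rcases eq_or_ne v 0 with rfl | hv
  · simp
  have hu : ‖v‖⁻¹ • v ∈ Metric.sphere (0 : ι → ℝ) 1 := by
    simp [norm_smul, inv_mul_cancel₀ (norm_ne_zero_iff.2 hv)]
  have hRv : R (p, ‖v‖⁻¹ • v) = R (p, v) := hR_smul p (inv_ne_zero (norm_ne_zero_iff.2 hv))
  constructor
  · rw [← le_div_iff₀ (hdot_pos hv)]
    exact (hmR (p, _) ⟨hp, hu⟩).trans_eq hRv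
  · rw [← div_le_iff₀ (hdot_pos hv)]
    exact hRv.symm.trans_le (hMR ⟨(p, _), ⟨hp, hu⟩, rfl⟩)

end Rayleigh

section EigenvalueFamilies

variable {α β ι : Type*} [Fintype ι] [DecidableEq ι] [Nonempty ι] {S : α → β → Matrix ι ι ℝ}
  (hS : ∀ a b, (S a b).IsHermitian) {s : Set α} {t : Set β} {m : ℝ}
include hS

theorem mem_lowerBounds_iInf_eigenvalues
    (hm : ∀ a ∈ s, ∀ b ∈ t, ∀ v, m * (v ⬝ᵥ v) ≤ v ⬝ᵥ S a b *ᵥ v) :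
    m ∈ lowerBounds {r | ∃ a ∈ s, ∃ b ∈ t, r = ⨅ i, (hS a b).eigenvalues i} := by
  rintro _ ⟨a, ha, b, hb, rfl⟩
  exact le_ciInf (((hS a b).le_eigenvalues_iff m).2 (hm a ha b hb))

theorem mem_upperBounds_iSup_eigenvalues
    (hm : ∀ a ∈ s, ∀ b ∈ t, ∀ v, v ⬝ᵥ S a b *ᵥ v ≤ m * (v ⬝ᵥ v)) :
    m ∈ upperBounds {r | ∃ a ∈ s, ∃ b ∈ t, r = ⨆ i, (hS a b).eigenvalues i} := by
  rintro _ ⟨a, ha, b, hb, rfl⟩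
  exact ciSup_le (((hS a b).eigenvalues_le_iff m).2 (hm a ha b hb))

theorem le_sInf_iInf_eigenvalues (hs : s.Nonempty) (ht : t.Nonempty)
    (hm : ∀ a ∈ s, ∀ b ∈ t, ∀ v, m * (v ⬝ᵥ v) ≤ v ⬝ᵥ S a b *ᵥ v) :
    m ≤ sInf {r | ∃ a ∈ s, ∃ b ∈ t, r = ⨅ i, (hS a b).eigenvalues i} :=
  le_csInf ⟨_, hs.some, hs.some_mem, ht.some, ht.some_mem, rfl⟩
    (mem_lowerBounds_iInf_eigenvalues hS hm)

theorem sInf_iInf_eigenvalues_mul_le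
    (hm : ∀ a ∈ s, ∀ b ∈ t, ∀ v, m * (v ⬝ᵥ v) ≤ v ⬝ᵥ S a b *ᵥ v) :
    ∀ a ∈ s, ∀ b ∈ t, ∀ v,
      sInf {r | ∃ a ∈ s, ∃ b ∈ t, r = ⨅ i, (hS a b).eigenvalues i} * (v ⬝ᵥ v) ≤
        v ⬝ᵥ S a b *ᵥ v := fun a ha b hb v =>
  (mul_le_mul_of_nonneg_right
    (csInf_le ⟨m, mem_lowerBounds_iInf_eigenvalues hS hm⟩ ⟨a, ha, b, hb, rfl⟩)
    (by simpa using dotProduct_star_self_nonneg v)).trans ((hS a b).iInf_eigenvalues_mul_le v)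

theorem dotProduct_mulVec_le_sSup_iSup_eigenvalues_mul
    (hm : ∀ a ∈ s, ∀ b ∈ t, ∀ v, v ⬝ᵥ S a b *ᵥ v ≤ m * (v ⬝ᵥ v)) :
    ∀ a ∈ s, ∀ b ∈ t, ∀ v, v ⬝ᵥ S a b *ᵥ v ≤
      sSup {r | ∃ a ∈ s, ∃ b ∈ t, r = ⨆ i, (hS a b).eigenvalues i} * (v ⬝ᵥ v) := fun a ha b hb v =>
  ((hS a b).le_iSup_eigenvalues_mul v).trans (mul_le_mul_of_nonneg_right
    (le_csSup ⟨m, mem_upperBounds_iSup_eigenvalues hS hm⟩ ⟨a, ha, b, hb, rfl⟩)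
    (by simpa using dotProduct_star_self_nonneg v))

theorem eigenvalue_extrema_pos_and_bounds [TopologicalSpace α] [TopologicalSpace β]
    (hs : IsCompact s) (ht : IsCompact t) (hs₀ : s.Nonempty) (ht₀ : t.Nonempty)
    (hSc : ContinuousOn (Function.uncurry S) (s ×ˢ t)) (hpd : ∀ a ∈ s, ∀ b ∈ t, (S a b).PosDef)
    {c₁ c₂ : ℝ} (hc₁ : c₁ = sInf {r | ∃ a ∈ s, ∃ b ∈ t, r = ⨅ i, (hS a b).eigenvalues i})
    (hc₂ : c₂ = sSup {r | ∃ a ∈ s, ∃ b ∈ t, r = ⨆ i, (hS a b).eigenvalues i}) :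
    0 < c₁ ∧ 0 < c₂ ∧ (∀ a ∈ s, ∀ b ∈ t, ∀ v, c₁ * (v ⬝ᵥ v) ≤ v ⬝ᵥ S a b *ᵥ v) ∧
      ∀ a ∈ s, ∀ b ∈ t, ∀ v, v ⬝ᵥ S a b *ᵥ v ≤ c₂ * (v ⬝ᵥ v) := by
  obtain ⟨m, M, hm, hmM⟩ := (hs.prod ht).exists_forall_mul_le_dotProduct_mulVec_le hSc
    fun p hp => hpd _ hp.1 _ hp.2
  have hm_le : ∀ a ∈ s, ∀ b ∈ t, ∀ v, m * (v ⬝ᵥ v) ≤ v ⬝ᵥ S a b *ᵥ v :=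
    fun a ha b hb v => (hmM (a, b) ⟨ha, hb⟩ v).1
  have hM_ge : ∀ a ∈ s, ∀ b ∈ t, ∀ v, v ⬝ᵥ S a b *ᵥ v ≤ M * (v ⬝ᵥ v) :=
    fun a ha b hb v => (hmM (a, b) ⟨ha, hb⟩ v).2
  have hc₁_pos : 0 < c₁ := hc₁ ▸ hm.trans_le (le_sInf_iInf_eigenvalues hS hs₀ ht₀ hm_le)
  have hlower := hc₁ ▸ sInf_iInf_eigenvalues_mul_le hS hm_le
  have hupper := hc₂ ▸ dotProduct_mulVec_le_sSup_iSup_eigenvalues_mul hS hM_ge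
  obtain ⟨a, ha⟩ := hs₀
  obtain ⟨b, hb⟩ := ht₀
  obtain ⟨i⟩ := ‹Nonempty ι›
  refine ⟨hc₁_pos, hc₁_pos.trans_le ?_, hlower, hupper⟩
  simpa using (hlower a ha b hb (Pi.single i 1)).trans (hupper a ha b hb _)

end EigenvalueFamilies

def boxVertices {κ : Type*} (lo hi : κ → ℝ) : Set (κ → ℝ) :=
  {ν | ∀ i, ν i = lo i ∨ ν i = hi i}

theorem LinearMap.exists_mem_boxVertices_ge {κ : Type*} [Fintype κ] [DecidableEq κ]
    (L : (κ → ℝ) →ₗ[ℝ] ℝ) {lo hi μ : κ → ℝ} (hμ : μ ∈ Icc lo hi) :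
    ∃ ν ∈ boxVertices lo hi, L μ ≤ L ν := by
  set e : κ → κ → ℝ := fun i j => if i = j then 1 else 0
  refine ⟨fun i => if 0 ≤ L (e i) then hi i else lo i, fun i => by dsimp only; split_ifs <;> simp,
    ?_⟩
  rw [L.pi_apply_eq_sum_univ μ, L.pi_apply_eq_sum_univ]
  refine Finset.sum_le_sum fun i _ => ?_
  split_ifs with h
  · exact mul_le_mul_of_nonneg_right (hμ.2 i) h
  · exact mul_le_mul_of_nonpos_right (hμ.1 i) (not_le.1 h).le

section Calculus

variable {𝕜 : Type*} [NontriviallyNormedField 𝕜] {ι ι' : Type*} [Fintype ι] {t : 𝕜}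

theorem HasDerivAt.dotProduct {f g : 𝕜 → ι → 𝕜} {f' g' : ι → 𝕜} (hf : HasDerivAt f f' t)
    (hg : HasDerivAt g g' t) :
    HasDerivAt (fun s => f s ⬝ᵥ g s) (f' ⬝ᵥ g t + f t ⬝ᵥ g') t := by
  simp only [_root_.dotProduct, ← Finset.sum_add_distrib]
  exact HasDerivAt.fun_sum fun i _ => (hasDerivAt_pi.1 hf i).mul (hasDerivAt_pi.1 hg i)

theorem HasDerivAt.matrix_mulVec {m : 𝕜 → Matrix ι' ι 𝕜} {v : 𝕜 → ι → 𝕜} {m' : Matrix ι' ι 𝕜}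
    {v' : ι → 𝕜} (hm : HasDerivAt m m' t) (hv : HasDerivAt v v' t) :
    HasDerivAt (fun s => m s *ᵥ v s) (m' *ᵥ v t + m t *ᵥ v') t :=
  hasDerivAt_pi.2 fun i => (hasDerivAt_pi.1 hm i).dotProduct hv

end Calculus

theorem lyapunov_derivative_le_of_boxVertices {ι κ : Type*} [Fintype ι] [DecidableEq ι]
    [Fintype κ] [DecidableEq κ] {F : ℝ × (κ → ℝ) →L[ℝ] Matrix ι ι ℝ} {P B : Matrix ι ι ℝ}
    {ε : ℝ} {νlo νhi μ : κ → ℝ}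
    (hLMI : ∀ ν ∈ boxVertices νlo νhi,
      (-(F (1, 0) + F (0, ν) + Bᵀ * P + P * B + ε • (1 : Matrix ι ι ℝ))).PosSemidef)
    (hμ : μ ∈ Icc νlo νhi) (w : ι → ℝ) :
    (B *ᵥ w) ⬝ᵥ P *ᵥ w + w ⬝ᵥ (F (1, μ) *ᵥ w + P *ᵥ (B *ᵥ w)) ≤ -ε * (w ⬝ᵥ w) := by
  let L : (κ → ℝ) →ₗ[ℝ] ℝ := LinearMap.applyₗ w ∘ₗ LinearMap.applyₗ w ∘ₗ
    (toLinearMap₂' ℝ : Matrix ι ι ℝ ≃ₗ[ℝ] _).toLinearMap ∘ₗ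
    (F ∘L ContinuousLinearMap.inr ℝ ℝ (κ → ℝ)).toLinearMap
  have hL (ν : κ → ℝ) : L ν = w ⬝ᵥ F (0, ν) *ᵥ w := toLinearMap₂'_apply' _ _ _
  obtain ⟨ν, hν, hμν⟩ := L.exists_mem_boxVertices_ge hμ
  have hvertex := (hLMI ν hν).dotProduct_mulVec_nonneg w
  have hsplit : F (1, μ) = F (1, 0) + F (0, μ) := by rw [← map_add, Prod.mk_add_mk]; simp
  have htranspose : (B *ᵥ w) ⬝ᵥ P *ᵥ w = w ⬝ᵥ Bᵀ *ᵥ P *ᵥ w := by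
    rw [dotProduct_mulVec w, vecMul_transpose]
  rw [hL, hL] at hμν
  simp only [star_trivial, neg_mulVec, dotProduct_neg, add_mulVec, dotProduct_add, smul_mulVec,
    one_mulVec, dotProduct_smul, smul_eq_mul, ← mulVec_mulVec] at hvertex
  rw [hsplit, htranspose, add_mulVec, dotProduct_add, dotProduct_add]
  linarith

theorem antitoneOn_exp_mul_of_hasDerivAt_le {W W' : ℝ → ℝ} {α a b : ℝ}
    (hW : ContinuousOn W (Icc a b)) (hW' : ∀ s ∈ Ioo a b, HasDerivAt W (W' s) s)
    (hle : ∀ s ∈ Ioo a b, W' s ≤ -α * W s) :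
    AntitoneOn (fun s => Real.exp (α * s) * W s) (Icc a b) := by
  refine antitoneOn_of_hasDerivWithinAt_nonpos (convex_Icc a b)
    ((Real.continuous_exp.comp (continuous_const_mul α)).continuousOn.mul hW)
    (f' := fun s => Real.exp (α * s) * α * W s + Real.exp (α * s) * W' s) (fun s hs => ?_)
    fun s hs => ?_ <;> rw [interior_Icc] at hs
  · have hexp := ((hasDerivAt_id s).const_mul α).exp
    simp only [mul_one, id] at hexp
    exact (hexp.mul (hW' s hs)).hasDerivWithinAt
  · have := mul_le_mul_of_nonneg_left (hle s hs) (Real.exp_pos (α * s)).le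
    linarith

theorem le_of_antitoneOn_Icc_of_jump_le {g : ℕ → ℝ → ℝ} {T : ℝ} (hT : 0 ≤ T)
    (hanti : ∀ k : ℕ, AntitoneOn (g k) (Icc ((k : ℝ) * T) ((k + 1) * T)))
    (hjump : ∀ k : ℕ, g (k + 1) ((k + 1) * T) ≤ g k ((k + 1) * T)) :
    ∀ k : ℕ, ∀ s ∈ Icc ((k : ℝ) * T) ((k + 1) * T), g k s ≤ g 0 0 := by
  intro k
  induction k with
  | zero =>
    intro s hs
    have h0 := hanti 0
    simp only [Nat.cast_zero, zero_mul, zero_add, one_mul] at h0 hs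
    exact h0 ⟨le_rfl, hT⟩ hs hs.1
  | succ k ih =>
    intro s hs
    have hk := hanti (k + 1)
    push_cast at hs hk ⊢
    calc g (k + 1) s ≤ g (k + 1) ((k + 1) * T) := hk ⟨le_rfl, by nlinarith⟩ hs hs.1
      _ ≤ g k ((k + 1) * T) := hjump k
      _ ≤ g 0 0 := ih _ ⟨by nlinarith, le_rfl⟩

theorem Convex.exists_continuous_eqOn_of_hasDerivWithinAt {κ : Type*} [Fintype κ]
    {s : Set ℝ} (hs : Convex ℝ s) {f f' : ℝ → κ → ℝ} {C : ℝ}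
    (hf : ∀ t ∈ s, HasDerivWithinAt f (f' t) s t) (hC : ∀ t ∈ s, ‖f' t‖ ≤ C) :
    ∃ g : ℝ → κ → ℝ, Continuous g ∧ EqOn f g s := by
  have hlip : LipschitzOnWith C.toNNReal f s :=
    hs.lipschitzOnWith_of_nnnorm_hasDerivWithin_le hf fun t ht =>
      norm_toNNReal (a := f' t) ▸ Real.toNNReal_le_toNNReal (hC t ht)
  obtain ⟨g, hg, hfg⟩ := hlip.extend_pi
  exact ⟨g, hg.continuous, hfg⟩

section LPV

variable {ι κ : Type*} [Fintype ι] [DecidableEq ι] [Fintype κ] [DecidableEq κ]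
  {S : ℝ → (κ → ℝ) → Matrix ι ι ℝ} {A : (κ → ℝ) → Matrix ι ι ℝ} {P : Set (κ → ℝ)}
  {νlo νhi : κ → ℝ} {T ε c : ℝ}

/-- `r` is the continuous extension of `ρ` from `(a, b)` to `[a, b]`; it exists because `ρ'` is
bounded. -/
theorem exists_antitoneOn_exp_mul_lyapunov
    (hS : Differentiable ℝ (Function.uncurry S))
    (hflow : ∀ τ ∈ Icc 0 T, ∀ θ ∈ P, ∀ ν ∈ boxVertices νlo νhi,
      (-(fderiv ℝ (Function.uncurry S) (τ, θ) (1, 0) + fderiv ℝ (Function.uncurry S) (τ, θ) (0, ν)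
        + (A θ)ᵀ * S τ θ + S τ θ * A θ + ε • (1 : Matrix ι ι ℝ))).PosSemidef)
    (hupper : ∀ τ ∈ Icc 0 T, ∀ θ ∈ P, ∀ v, v ⬝ᵥ S τ θ *ᵥ v ≤ c * (v ⬝ᵥ v)) (hε : 0 ≤ ε) (hc : 0 < c)
    (hP : IsClosed P) {a b : ℝ} (hab : a < b) (hbT : b ≤ a + T) {ρ ρ' : ℝ → κ → ℝ}
    (hρP : ∀ s ∈ Ioo a b, ρ s ∈ P)
    (hρ : ∀ s ∈ Ioo a b, HasDerivAt ρ (ρ' s) s ∧ ρ' s ∈ Icc νlo νhi)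
    {x : ℝ → ι → ℝ} (hx : ContinuousOn x (Icc a b))
    (hx' : ∀ s ∈ Ioo a b, HasDerivAt x (A (ρ s) *ᵥ x s) s) :
    ∃ r : ℝ → κ → ℝ, MapsTo r (Icc a b) P ∧
      AntitoneOn (fun s => Real.exp (ε / c * s) * (x s ⬝ᵥ S (s - a) (r s) *ᵥ x s)) (Icc a b) := by
  obtain ⟨C, hC⟩ := isBounded_iff_forall_norm_le.1 (Metric.isBounded_Icc νlo νhi)
  obtain ⟨r, hr, hρr⟩ := (convex_Ioo a b).exists_continuous_eqOn_of_hasDerivWithinAt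
    (fun s hs => (hρ s hs).1.hasDerivWithinAt) fun s hs => hC _ (hρ s hs).2
  have hrP : MapsTo r (Icc a b) P := by
    have hrP' : MapsTo r (Ioo a b) P := fun u hu => hρr hu ▸ hρP u hu
    simpa [closure_Ioo hab.ne, hP.closure_eq] using hrP'.closure hr
  have hr' (s : ℝ) (hs : s ∈ Ioo a b) : HasDerivAt r (ρ' s) s :=
    (hρ s hs).1.congr_of_eventuallyEq (hρr.eventuallyEq_of_mem (Ioo_mem_nhds hs.1 hs.2)).symm
  set F : ℝ → ℝ × (κ → ℝ) →L[ℝ] Matrix ι ι ℝ := fun s => fderiv ℝ (Function.uncurry S) (s - a, r s)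
  refine ⟨r, hrP, antitoneOn_exp_mul_of_hasDerivAt_le
    (W' := fun s => (A (r s) *ᵥ x s) ⬝ᵥ S (s - a) (r s) *ᵥ x s
      + x s ⬝ᵥ (F s (1, ρ' s) *ᵥ x s + S (s - a) (r s) *ᵥ (A (r s) *ᵥ x s))) ?_
    (fun s hs => ?_) fun s hs => ?_⟩
  · exact continuous_dotProduct_mulVec.comp_continuousOn
      ((hS.continuous.comp ((continuous_id.sub continuous_const).prodMk hr)).continuousOn.prodMk hx)
  · have hSr : HasDerivAt (fun u => S (u - a) (r u)) (F s (1, ρ' s)) s :=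
      (hS _).hasFDerivAt.comp_hasDerivAt s (((hasDerivAt_id s).sub_const a).prodMk (hr' s hs))
    have hxs := hρr hs ▸ hx' s hs
    exact hxs.dotProduct (hSr.matrix_mulVec hxs)
  · have hτ : s - a ∈ Icc 0 T := ⟨by linarith [hs.1], by linarith [hs.2]⟩
    have hθ : r s ∈ P := hrP (Ioo_subset_Icc_self hs)
    have hflow_le := lyapunov_derivative_le_of_boxVertices (hflow _ hτ _ hθ) (hρ s hs).2 (x s)
    have hV := mul_le_mul_of_nonneg_left (hupper _ hτ _ hθ (x s)) (div_nonneg hε hc.le)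
    rw [← mul_assoc, div_mul_cancel₀ ε hc.ne'] at hV
    linarith

theorem ne_natCast_mul_of_mem_Ioo {T s : ℝ} (hT : 0 < T) {k : ℕ}
    (hs : s ∈ Ioo ((k : ℝ) * T) ((k + 1) * T)) (j : ℕ) : s ≠ j * T := by
  rintro rfl
  have hkj : (k : ℝ) < j := lt_of_mul_lt_mul_right hs.1 hT.le
  have hjk : (j : ℝ) < k + 1 := lt_of_mul_lt_mul_right hs.2 hT.le
  norm_cast at hkj hjk
  omega

theorem exists_exp_mul_lyapunov_le
    (hS : Differentiable ℝ (Function.uncurry S))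
    (hflow : ∀ τ ∈ Icc 0 T, ∀ θ ∈ P, ∀ ν ∈ boxVertices νlo νhi,
      (-(fderiv ℝ (Function.uncurry S) (τ, θ) (1, 0) + fderiv ℝ (Function.uncurry S) (τ, θ) (0, ν)
        + (A θ)ᵀ * S τ θ + S τ θ * A θ + ε • (1 : Matrix ι ι ℝ))).PosSemidef)
    (hjump : ∀ θ ∈ P, ∀ η ∈ P, (S T η - S 0 θ).PosSemidef)
    (hupper : ∀ τ ∈ Icc 0 T, ∀ θ ∈ P, ∀ v, v ⬝ᵥ S τ θ *ᵥ v ≤ c * (v ⬝ᵥ v)) (hε : 0 ≤ ε) (hc : 0 < c)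
    (hP : IsClosed P) (hT : 0 < T) {ρ ρ' : ℝ → κ → ℝ} (hρP : ∀ t ≥ (0 : ℝ), ρ t ∈ P)
    (hρ : ∀ k : ℕ, ∀ t ∈ Ioo ((k : ℝ) * T) ((k + 1) * T),
      HasDerivAt ρ (ρ' t) t ∧ ρ' t ∈ Icc νlo νhi)
    {x : ℝ → ι → ℝ} (hx : ContinuousOn x (Ici 0))
    (hx' : ∀ t ≥ (0 : ℝ), (∀ k : ℕ, 1 ≤ k → t ≠ k * T) →
      HasDerivWithinAt x (A (ρ t) *ᵥ x t) (Ici 0) t) :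
    ∀ t ≥ (0 : ℝ), ∃ τ ∈ Icc 0 T, ∃ θ ∈ P, ∃ θ₀ ∈ P,
      Real.exp (ε / c * t) * (x t ⬝ᵥ S τ θ *ᵥ x t) ≤ x 0 ⬝ᵥ S 0 θ₀ *ᵥ x 0 := by
  have hkT (k : ℕ) : 0 ≤ (k : ℝ) * T := by positivity
  have hpiece (k : ℕ) := exists_antitoneOn_exp_mul_lyapunov hS hflow hupper hε hc hP
    (a := k * T) (b := (k + 1) * T) (by nlinarith) (by linarith) (ρ := ρ)
    (fun s hs => hρP s (hkT k |>.trans hs.1.le)) (hρ k)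
    (hx.mono fun s hs => (hkT k).trans hs.1) fun s hs =>
      (hx' s ((hkT k).trans hs.1.le) fun j _ => ne_natCast_mul_of_mem_Ioo hT hs j).hasDerivAt
        (Ici_mem_nhds ((hkT k).trans_lt hs.1))
  choose r hrP hanti using hpiece
  have hjump' (k : ℕ) :
      Real.exp (ε / c * ((k + 1) * T)) * (x ((k + 1) * T) ⬝ᵥ
          S ((k + 1) * T - ↑(k + 1) * T) (r (k + 1) ((k + 1) * T)) *ᵥ x ((k + 1) * T)) ≤
        Real.exp (ε / c * ((k + 1) * T)) * (x ((k + 1) * T) ⬝ᵥ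
          S ((k + 1) * T - k * T) (r k ((k + 1) * T)) *ᵥ x ((k + 1) * T)) := by
    have hend : ((k : ℝ) + 1) * T ∈ Icc ((k : ℝ) * T) ((k + 1) * T) := ⟨by nlinarith, le_rfl⟩
    have hstart : ((k : ℝ) + 1) * T ∈ Icc (((k + 1 : ℕ) : ℝ) * T) ((↑(k + 1) + 1) * T) := by
      push_cast; exact ⟨le_rfl, by nlinarith⟩
    have h := (hjump _ (hrP (k + 1) hstart) _ (hrP k hend)).dotProduct_mulVec_nonneg
      (x ((k + 1) * T))
    rw [star_trivial, sub_mulVec, dotProduct_sub, sub_nonneg] at h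
    have hτ₀ : ((k : ℝ) + 1) * T - ↑(k + 1) * T = 0 := by push_cast; ring
    have hτT : ((k : ℝ) + 1) * T - k * T = T := by ring
    rw [hτ₀, hτT]
    exact mul_le_mul_of_nonneg_left h (Real.exp_pos _).le
  intro t ht
  set k := ⌊t / T⌋₊
  have htk : t ∈ Icc ((k : ℝ) * T) ((k + 1) * T) :=
    ⟨(le_div_iff₀ hT).1 (Nat.floor_le (div_nonneg ht hT.le)),
      ((div_le_iff₀ hT).1 (Nat.lt_floor_add_one (t / T)).le)⟩
  refine ⟨t - k * T, ⟨by linarith [htk.1], by linarith [htk.2]⟩, r k t, hrP k htk, r 0 0,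
    hrP 0 (by simp [hT.le]), ?_⟩
  simpa using le_of_antitoneOn_Icc_of_jump_le hT.le hanti hjump' k t htk

end LPV

theorem sqrt_le_sqrt_div_mul_exp_mul_sqrt {c₁ c₂ ε t a b : ℝ} (hc₁ : 0 < c₁) (hb : 0 ≤ b)
    (h : Real.exp (ε / c₂ * t) * (c₁ * a) ≤ c₂ * b) :
    √a ≤ √(c₂ / c₁) * Real.exp (-(ε / (2 * c₂)) * t) * √b := by
  have ha : a ≤ c₂ / c₁ * (Real.exp (-(ε / c₂ * t)) * b) := by
    rw [Real.exp_neg, div_mul_eq_mul_div, le_div_iff₀ hc₁]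
    rw [← le_div_iff₀' (Real.exp_pos _)] at h
    calc a * c₁ ≤ c₂ * b / Real.exp (ε / c₂ * t) := by linarith
      _ = _ := by field_simp
  calc √a ≤ √(c₂ / c₁ * (Real.exp (-(ε / c₂ * t)) * b)) := Real.sqrt_le_sqrt ha
    _ = √(c₂ / c₁) * Real.exp (-(ε / (2 * c₂)) * t) * √b := by
      rw [Real.sqrt_mul' _ (by positivity), Real.sqrt_mul' _ hb, ← Real.exp_half, mul_assoc]
      congr 3
      ring

theorem constant_dwell_time_exponential_stability_general
    {n N : ℕ}
    -- the parameter box 𝒫 = [ρlo, ρhi] and the derivative box 𝒟 = [νlo, νhi]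
    (ρlo ρhi νlo νhi : Fin N → ℝ)
    -- the system matrix, continuous (hence bounded) on the compact box 𝒫
    (A : (Fin N → ℝ) → Matrix (Fin n) (Fin n) ℝ)
    -- the dwell-time
    (T : ℝ) (hT : 0 < T)
    -- the Lyapunov certificate
    (ε : ℝ) (hε : 0 < ε)
    (S : ℝ → (Fin N → ℝ) → Matrix (Fin n) (Fin n) ℝ)
    (hS_c1 : ContDiff ℝ 1 (fun p : ℝ × (Fin N → ℝ) => S p.1 p.2))
    (hS_herm : ∀ τ θ, (S τ θ).IsHermitian)
    (hS_pd : ∀ τ ∈ Icc (0 : ℝ) T, ∀ θ ∈ Icc ρlo ρhi, (S τ θ).PosDef)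
    -- condition (i): ∂_τ S + ∂_ρ S μ + AᵀS + SA + εI ⪯ 0 on [0,T̄] × 𝒫 × 𝒟ᵛ
    (hflow : ∀ τ ∈ Icc (0 : ℝ) T, ∀ θ ∈ Icc ρlo ρhi,
      ∀ μ : Fin N → ℝ, (∀ i, μ i = νlo i ∨ μ i = νhi i) →
      (-(fderiv ℝ (fun p : ℝ × (Fin N → ℝ) => S p.1 p.2) (τ, θ) (1, 0)
          + fderiv ℝ (fun p : ℝ × (Fin N → ℝ) => S p.1 p.2) (τ, θ) (0, μ)
          + (A θ)ᵀ * S τ θ + S τ θ * A θ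
          + ε • (1 : Matrix (Fin n) (Fin n) ℝ))).PosSemidef)
    -- condition (ii): S(0,θ) − S(T̄,η) ⪯ 0 on 𝒫 × 𝒫
    (hjump : ∀ θ ∈ Icc ρlo ρhi, ∀ η ∈ Icc ρlo ρhi, (S T η - S 0 θ).PosSemidef)
    -- c₁ = min λ_min(S(τ,θ)) and c₂ = max λ_max(S(τ,θ)) over [0,T̄] × 𝒫
    (c₁ c₂ : ℝ)
    (hc₁ : c₁ = sInf {r : ℝ | ∃ τ ∈ Icc (0 : ℝ) T, ∃ θ ∈ Icc ρlo ρhi,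
      r = ⨅ i, (hS_herm τ θ).eigenvalues i})
    (hc₂ : c₂ = sSup {r : ℝ | ∃ τ ∈ Icc (0 : ℝ) T, ∃ θ ∈ Icc ρlo ρhi,
      r = ⨆ i, (hS_herm τ θ).eigenvalues i})
    -- a parameter trajectory with constant dwell-time T̄ (jump times t_k = k T̄)
    (ρ ρ' : ℝ → Fin N → ℝ)
    (hρP : ∀ t ≥ (0 : ℝ), ρ t ∈ Icc ρlo ρhi)
    (hρdiff : ∀ k : ℕ, ∀ t ∈ Ioo ((k : ℝ) * T) (((k : ℝ) + 1) * T),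
      HasDerivAt ρ (ρ' t) t ∧ ρ' t ∈ Icc νlo νhi)
    -- a solution of the LPV system
    (x : ℝ → Fin n → ℝ)
    (hxcont : ContinuousOn x (Ici 0))
    (hxdiff : ∀ t ≥ (0 : ℝ), (∀ k : ℕ, 1 ≤ k → t ≠ (k : ℝ) * T) →
      HasDerivWithinAt x ((A (ρ t)).mulVec (x t)) (Ici 0) t) :
    ∀ t ≥ (0 : ℝ),
      Real.sqrt (x t ⬝ᵥ x t) ≤
        Real.sqrt (c₂ / c₁) * Real.exp (-(ε / (2 * c₂)) * t) * Real.sqrt (x 0 ⬝ᵥ x 0) := by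
  intro t ht
  rcases isEmpty_or_nonempty (Fin n) with hn | hn
  · simp [dotProduct]
  obtain ⟨hc₁_pos, hc₂_pos, hlower, hupper⟩ := eigenvalue_extrema_pos_and_bounds hS_herm
    isCompact_Icc isCompact_Icc (nonempty_Icc.2 hT.le) ⟨ρ 0, hρP 0 le_rfl⟩
    hS_c1.continuous.continuousOn hS_pd hc₁ hc₂
  obtain ⟨τ, hτ, θ, hθ, θ₀, hθ₀, hV⟩ := exists_exp_mul_lyapunov_le
    (hS_c1.differentiable one_ne_zero) hflow hjump hupper hε.le hc₂_pos isClosed_Icc hT hρP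
    hρdiff hxcont hxdiff t ht
  refine sqrt_le_sqrt_div_mul_exp_mul_sqrt hc₁_pos
    (by simpa using dotProduct_star_self_nonneg (x 0)) ?_
  calc Real.exp (ε / c₂ * t) * (c₁ * (x t ⬝ᵥ x t))
      ≤ Real.exp (ε / c₂ * t) * (x t ⬝ᵥ S τ θ *ᵥ x t) :=
        mul_le_mul_of_nonneg_left (hlower τ hτ θ hθ _) (Real.exp_pos _).le
    _ ≤ x 0 ⬝ᵥ S 0 θ₀ *ᵥ x 0 := hV
    _ ≤ c₂ * (x 0 ⬝ᵥ x 0) := hupper 0 (left_mem_Icc.2 hT.le) θ₀ hθ₀ _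

theorem constant_dwell_time_exponential_stability
    {n N : ℕ}
    -- the parameter box 𝒫 = [ρlo, ρhi] and the derivative box 𝒟 = [νlo, νhi]
    (ρlo ρhi νlo νhi : Fin N → ℝ)
    (hbox : ρlo ≤ ρhi) (hνbox : νlo ≤ νhi)
    -- the system matrix, continuous (hence bounded) on the compact box 𝒫
    (A : (Fin N → ℝ) → Matrix (Fin n) (Fin n) ℝ)
    (hA : ContinuousOn A (Icc ρlo ρhi))
    -- the dwell-time
    (T : ℝ) (hT : 0 < T)
    -- the Lyapunov certificate
    (ε : ℝ) (hε : 0 < ε)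
    (S : ℝ → (Fin N → ℝ) → Matrix (Fin n) (Fin n) ℝ)
    (hS_c1 : ContDiff ℝ 1 (fun p : ℝ × (Fin N → ℝ) => S p.1 p.2))
    (hS_herm : ∀ τ θ, (S τ θ).IsHermitian)
    (hS_pd : ∀ τ ∈ Icc (0 : ℝ) T, ∀ θ ∈ Icc ρlo ρhi, (S τ θ).PosDef)
    -- condition (i): ∂_τ S + ∂_ρ S μ + AᵀS + SA + εI ⪯ 0 on [0,T̄] × 𝒫 × 𝒟ᵛ
    (hflow : ∀ τ ∈ Icc (0 : ℝ) T, ∀ θ ∈ Icc ρlo ρhi,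
      ∀ μ : Fin N → ℝ, (∀ i, μ i = νlo i ∨ μ i = νhi i) →
      (-(fderiv ℝ (fun p : ℝ × (Fin N → ℝ) => S p.1 p.2) (τ, θ) (1, 0)
          + fderiv ℝ (fun p : ℝ × (Fin N → ℝ) => S p.1 p.2) (τ, θ) (0, μ)
          + (A θ)ᵀ * S τ θ + S τ θ * A θ
          + ε • (1 : Matrix (Fin n) (Fin n) ℝ))).PosSemidef)
    -- condition (ii): S(0,θ) − S(T̄,η) ⪯ 0 on 𝒫 × 𝒫
    (hjump : ∀ θ ∈ Icc ρlo ρhi, ∀ η ∈ Icc ρlo ρhi, (S T η - S 0 θ).PosSemidef)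
    -- c₁ = min λ_min(S(τ,θ)) and c₂ = max λ_max(S(τ,θ)) over [0,T̄] × 𝒫
    (c₁ c₂ : ℝ)
    (hc₁ : c₁ = sInf {r : ℝ | ∃ τ ∈ Icc (0 : ℝ) T, ∃ θ ∈ Icc ρlo ρhi,
      r = ⨅ i, (hS_herm τ θ).eigenvalues i})
    (hc₂ : c₂ = sSup {r : ℝ | ∃ τ ∈ Icc (0 : ℝ) T, ∃ θ ∈ Icc ρlo ρhi,
      r = ⨆ i, (hS_herm τ θ).eigenvalues i})
    -- a parameter trajectory with constant dwell-time T̄ (jump times t_k = k T̄)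
    (ρ ρ' : ℝ → Fin N → ℝ)
    (hρP : ∀ t ≥ (0 : ℝ), ρ t ∈ Icc ρlo ρhi)
    (hρleft : ∀ t > (0 : ℝ), Tendsto ρ (nhdsWithin t (Iio t)) (nhds (ρ t)))
    (hρdiff : ∀ k : ℕ, ∀ t ∈ Ioo ((k : ℝ) * T) (((k : ℝ) + 1) * T),
      HasDerivAt ρ (ρ' t) t ∧ ρ' t ∈ Icc νlo νhi)
    -- a solution of the LPV system
    (x : ℝ → Fin n → ℝ)
    (hxcont : ContinuousOn x (Ici 0))
    (hxdiff : ∀ t ≥ (0 : ℝ), (∀ k : ℕ, 1 ≤ k → t ≠ (k : ℝ) * T) →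
      HasDerivWithinAt x ((A (ρ t)).mulVec (x t)) (Ici 0) t) :
    ∀ t ≥ (0 : ℝ),
      Real.sqrt (x t ⬝ᵥ x t) ≤
        Real.sqrt (c₂ / c₁) * Real.exp (-(ε / (2 * c₂)) * t) * Real.sqrt (x 0 ⬝ᵥ x 0) :=
  constant_dwell_time_exponential_stability_general ρlo ρhi νlo νhi A T hT ε hε S hS_c1 hS_herm
    hS_pd hflow hjump c₁ c₂ hc₁ hc₂ ρ ρ' hρP hρdiff x hxcont hxdiff
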